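/- arXiv:1806.03672 — 2 statements merged into one kernel-verified Lean document; each statement's English description precedes it below -/
import Mathlib

section
/- Let G be a finite non-nilpotent group in which every non-subnormal primary subgroup satisfies the Frobenius normalizer condition. Then for every maximal nilpotent subgroup V of G with F(G)V = G, the normal core V_G equals Z_∞(G). -/
open Subgroup

/-- The supremum of a family of normal subgroups is normal. -/
theorem Subgroup.normal_iSup_of_normal {G : Type*} [Group G] {ι : Sort*} (H : ι → Subgroup G)
    (h : ∀ i, (H i).Normal) : (⨆ i, H i).Normal := by
  constructor
  intro x hx g
  refine Subgroup.iSup_induction (C := fun y => g * y * g⁻¹ ∈ ⨆ i, H i) H hx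
    (fun i y hy => le_iSup H i ((h i).conj_mem y hy g)) (by simpa using Subgroup.one_mem _) ?_
  intro a b ha hb
  have heq : g * (a * b) * g⁻¹ = (g * a * g⁻¹) * (g * b * g⁻¹) := by group
  rw [heq]; exact mul_mem ha hb

/-- The centralizer `C_G(P)` is a normal subgroup of the normalizer `N_G(P)`. -/
instance Subgroup.centralizer_subgroupOf_normalizer_normal {G : Type*} [Group G]
    (P : Subgroup G) : ((Subgroup.centralizer (P : Set G)).subgroupOf (normalizer (P : Set G))).Normal :=
  P.normalizerMonoidHom_ker ▸ P.normalizerMonoidHom.normal_ker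

/-- A subgroup `P` (a `p`-subgroup) satisfies the Frobenius normalizer condition in `G`
if `N_G(P)/C_G(P)` is a `p`-group. -/
def FrobeniusNC {G : Type*} [Group G] (p : ℕ) (P : Subgroup G) : Prop :=
  IsPGroup p (normalizer (P : Set G) ⧸ (Subgroup.centralizer (P : Set G)).subgroupOf (normalizer (P : Set G)))

/-- A subgroup is subnormal if there is a chain from it to the whole group in which
each term is normal in the next. -/
def IsSubnormal {G : Type*} [Group G] (H : Subgroup G) : Prop :=
  ∃ (n : ℕ) (c : ℕ → Subgroup G), c 0 = H ∧ c n = ⊤ ∧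
    ∀ i < n, c i ≤ c (i + 1) ∧ ((c i).subgroupOf (c (i + 1))).Normal

/-- The hypercenter `Z_∞(G)`: the largest term of the upper central series. -/
def hypercenter (G : Type*) [Group G] : Subgroup G :=
  ⨆ n, Subgroup.upperCentralSeries G n

instance hypercenter_normal (G : Type*) [Group G] : (hypercenter G).Normal :=
  Subgroup.normal_iSup_of_normal _ fun _ => inferInstance

/-- The Fitting subgroup `F(G)`: the largest normal nilpotent subgroup (of a finite group). -/
def FittingSubgroup (G : Type*) [Group G] : Subgroup G :=
  ⨆ (H : Subgroup G) (_ : H.Normal ∧ Group.IsNilpotent H), H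

instance FittingSubgroup_normal (G : Type*) [Group G] : (FittingSubgroup G).Normal :=
  Subgroup.normal_iSup_of_normal _ fun H =>
    Subgroup.normal_iSup_of_normal _ fun hH => hH.1

/-- `F_0(G)`: the product of all normal Sylow subgroups of `G`. -/
def normalSylowProduct (G : Type*) [Group G] : Subgroup G :=
  ⨆ (p : ℕ) (_ : p.Prime) (P : Sylow p G) (_ : (P : Subgroup G).Normal), (P : Subgroup G)

instance normalSylowProduct_normal (G : Type*) [Group G] : (normalSylowProduct G).Normal := by
  apply Subgroup.normal_iSup_of_normal; intro p
  apply Subgroup.normal_iSup_of_normal; intro _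
  apply Subgroup.normal_iSup_of_normal; intro P
  apply Subgroup.normal_iSup_of_normal; intro hP
  exact hP

/-- A Carter subgroup: a nilpotent self-normalizing subgroup. -/
def IsCarterSubgroup {G : Type*} [Group G] (U : Subgroup G) : Prop :=
  Group.IsNilpotent U ∧ normalizer (U : Set G) = U

/-- A maximal nilpotent subgroup: maximal under inclusion among nilpotent subgroups. -/
def IsMaximalNilpotent {G : Type*} [Group G] (U : Subgroup G) : Prop :=
  Group.IsNilpotent U ∧ ∀ V : Subgroup G, Group.IsNilpotent V → U ≤ V → V = U


/-!
The normal core `W` of `V` is nilpotent, hence generated by its Sylow subgroups, each of which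
is characteristic in `W` and so normal in `G`. For a Sylow `p`-subgroup `N` of `W`, the Sylow
`q`-subgroups (`q ≠ p`) of `V` and of every normal nilpotent subgroup of `G` normalize `N` and
are normalized by it, so by coprimality they centralize `N`; as `G = F(G)V`, the group
`G / C_G(N)` is a `p`-group. A Sylow `p`-subgroup `S` of `G` then satisfies `S C_G(N) = G`, so a
nontrivial fixed point of `S` acting on `N` by conjugation is central, and induction on `|G|`
(passing to `G / (Z(G) ∩ N)`) gives `N ≤ Z_∞(G)`. Conversely `Z_∞(G)V` is nilpotent, so
`Z_∞(G) ≤ V` by maximality, and `Z_∞(G)` is normal.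
-/
namespace Subgroup

variable {G : Type*} [Group G]

theorem mem_hypercenter_iff {x : G} :
    x ∈ hypercenter G ↔ ∃ n, x ∈ upperCentralSeries G n :=
  mem_iSup_of_directed (upperCentralSeries_mono G).directed_le

theorem comap_upperCentralSeries_quotient_le {A : Subgroup G} [A.Normal] {m : ℕ}
    (hA : A ≤ upperCentralSeries G m) (n : ℕ) :
    (upperCentralSeries (G ⧸ A) n).comap (QuotientGroup.mk' A) ≤
      upperCentralSeries G (m + n) := by
  induction n with
  | zero =>
    intro x hx
    exact hA (by simpa [QuotientGroup.eq_one_iff] using hx)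
  | succ n ih =>
    intro x hx
    rw [mem_comap, mem_upperCentralSeries_succ_iff] at hx
    rw [← add_assoc, mem_upperCentralSeries_succ_iff]
    exact fun y ↦ ih (hx y)

theorem isNilpotent_of_le_upperCentralSeries_of_isNilpotent_quotient {A : Subgroup G} [A.Normal]
    {m : ℕ} (hA : A ≤ upperCentralSeries G m) [hG : Group.IsNilpotent (G ⧸ A)] :
    Group.IsNilpotent G := by
  obtain ⟨n, hn⟩ := hG.nilpotent
  refine ⟨m + n, eq_top_iff.mpr fun x _ ↦ comap_upperCentralSeries_quotient_le hA n ?_⟩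
  rw [mem_comap, hn]
  trivial

theorem comap_hypercenter_quotient_le {A : Subgroup G} [A.Normal] (hA : A ≤ center G) :
    (hypercenter (G ⧸ A)).comap (QuotientGroup.mk' A) ≤ hypercenter G := by
  intro x hx
  obtain ⟨n, hn⟩ := mem_hypercenter_iff.mp hx
  rw [← upperCentralSeries_one] at hA
  exact mem_hypercenter_iff.mpr ⟨1 + n, comap_upperCentralSeries_quotient_le hA n hn⟩

theorem upperCentralSeries_subgroupOf_le (K : Subgroup G) (n : ℕ) :
    (upperCentralSeries G n).subgroupOf K ≤ upperCentralSeries K n := by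
  induction n with
  | zero => simp only [upperCentralSeries_zero, bot_subgroupOf, le_refl]
  | succ n ih =>
    intro x hx
    rw [mem_subgroupOf, mem_upperCentralSeries_succ_iff] at hx
    rw [mem_upperCentralSeries_succ_iff]
    exact fun y ↦ ih (hx y)

theorem isNilpotent_sup_upperCentralSeries {V : Subgroup G} [Group.IsNilpotent V] (n : ℕ) :
    Group.IsNilpotent ↥(V ⊔ upperCentralSeries G n) :=
  have := Group.nilpotent_of_mulEquiv (QuotientGroup.quotientInfEquivProdNormalQuotient V
    (upperCentralSeries G n))
  isNilpotent_of_le_upperCentralSeries_of_isNilpotent_quotient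
    (upperCentralSeries_subgroupOf_le _ n)

end Subgroup

theorem IsMaximalNilpotent.hypercenter_le {G : Type*} [Group G] {V : Subgroup G}
    (hV : IsMaximalNilpotent V) : hypercenter G ≤ V :=
  have := hV.1
  iSup_le fun n ↦
    le_sup_right.trans_eq (hV.2 _ (isNilpotent_sup_upperCentralSeries n) le_sup_left)

theorem IsPGroup.quotient_centralizer_map {G H : Type*} [Group G] [Group H] {p : ℕ} {f : G →* H}
    (hf : Function.Surjective f) {N : Subgroup G} [N.Normal] [(N.map f).Normal]
    (hC : IsPGroup p (G ⧸ centralizer (N : Set G))) :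
    IsPGroup p (H ⧸ centralizer ((N.map f : Subgroup H) : Set H)) := by
  have hle : centralizer (N : Set G) ≤ (centralizer ((N.map f : Subgroup H) : Set H)).comap f :=
    map_le_iff_le_comap.mp (by simpa only [coe_map] using map_centralizer_le_centralizer_image _ f)
  exact hC.of_surjective _
    (QuotientGroup.map_surjective_of_surjective _ _ f (QuotientGroup.mk_surjective.comp hf) hle)

section FiniteGroup

variable {G : Type*} [Group G] [Finite G]

theorem card_quotient_lt_of_ne_bot {K : Subgroup G} [K.Normal] (hK : K ≠ ⊥) :
    Nat.card (G ⧸ K) < Nat.card G := by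
  rw [← K.card_mul_index, index_eq_card]
  exact lt_mul_of_one_lt_left Nat.card_pos ((one_lt_card_iff_ne_bot K).mpr hK)

variable {p : ℕ} [Fact p.Prime]

theorem Sylow.sup_eq_top_of_isPGroup_quotient (S : Sylow p G) {C : Subgroup G} [C.Normal]
    (hC : IsPGroup p (G ⧸ C)) : (S : Subgroup G) ⊔ C = ⊤ := by
  obtain ⟨n, hn⟩ := hC.exists_card_eq
  have hcop : S.index.Coprime (p ^ n) :=
    (Nat.Coprime.pow_right n (((Fact.out : p.Prime).coprime_iff_not_dvd.mpr S.not_dvd_index).symm))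
  rw [← index_eq_one]
  refine (Nat.Coprime.coprime_dvd_left (index_dvd_of_le le_sup_left) hcop).eq_one_of_dvd ?_
  rw [← hn, ← index_eq_card]
  exact index_dvd_of_le le_sup_right

theorem IsPGroup.center_inf_ne_bot {N : Subgroup G} [N.Normal] (hN : IsPGroup p N) (hN1 : N ≠ ⊥)
    (hC : IsPGroup p (G ⧸ centralizer (N : Set G))) : center G ⊓ N ≠ ⊥ := by
  obtain ⟨S⟩ : Nonempty (Sylow p G) := inferInstance
  let : MulAction S N :=
    MulAction.compHom _ ((MulAut.conjNormal (H := N)).comp (S : Subgroup G).subtype)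
  have hdvd : p ∣ Nat.card N := hN.card_eq_or_dvd.resolve_left (mt card_eq_one.mp hN1)
  have hfix1 : (1 : N) ∈ MulAction.fixedPoints S N :=
    fun s ↦ map_one (MulAut.conjNormal (s : G))
  obtain ⟨x, hx, hx1⟩ :=
    S.isPGroup'.exists_fixed_point_of_prime_dvd_card_of_fixed_point N hdvd hfix1
  have hcent : (S : Subgroup G) ⊔ centralizer (N : Set G) ≤ centralizer {(x : G)} := by
    refine sup_le (fun s hs ↦ mem_centralizer_singleton_iff.mpr ?_) fun c hc ↦ ?_
    · have := congrArg Subtype.val (hx ⟨s, hs⟩)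
      simp only [MulAction.compHom_smul_def, MonoidHom.comp_apply, coe_subtype, MulAut.smul_def,
        MulAut.conjNormal_apply] at this
      exact mul_inv_eq_iff_eq_mul.mp this
    · exact mem_centralizer_singleton_iff.mpr (mem_centralizer_iff.mp hc x x.2).symm
  rw [S.sup_eq_top_of_isPGroup_quotient (C := centralizer (N : Set G)) hC] at hcent
  refine ne_bot_iff_exists_ne_one.mpr
    ⟨⟨x, mem_center_iff.mpr fun g ↦ ?_, x.2⟩, fun h ↦ ?_⟩
  · exact mem_centralizer_singleton_iff.mp (hcent (mem_top g))
  · exact hx1 (Subtype.ext (congrArg Subtype.val h).symm)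

theorem le_hypercenter_of_isPGroup_quotient_centralizer {N : Subgroup G} [hNn : N.Normal]
    (hN : IsPGroup p N) (hC : IsPGroup p (G ⧸ centralizer (N : Set G))) : N ≤ hypercenter G := by
  induction hG : Nat.card G using Nat.strong_induction_on generalizing G with
  | _ n ih =>
    by_cases hN1 : N = ⊥
    · exact hN1 ▸ bot_le
    set K := center G ⊓ N
    set π := QuotientGroup.mk' K
    have : (N.map π).Normal := hNn.map π (QuotientGroup.mk'_surjective K)
    have hN' : N.map π ≤ hypercenter (G ⧸ K) :=
      ih _ (hG ▸ card_quotient_lt_of_ne_bot (hN.center_inf_ne_bot hN1 hC)) (hN.map π)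
        (hC.quotient_centralizer_map (QuotientGroup.mk'_surjective K)) rfl
    calc N ≤ (N.map π).comap π := le_comap_map π N
      _ ≤ (hypercenter (G ⧸ K)).comap π := comap_mono hN'
      _ ≤ hypercenter G := comap_hypercenter_quotient_le inf_le_left

end FiniteGroup

theorem le_centralizer_of_le_normalizer_of_coprime {G : Type*} [Group G] {A B : Subgroup G}
    (hA : A ≤ normalizer (B : Set G)) (hB : B ≤ normalizer (A : Set G))
    (hAB : (Nat.card A).Coprime (Nat.card B)) : A ≤ centralizer (B : Set G) := by
  intro a ha
  rw [mem_centralizer_iff]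
  intro b hb
  have hcommA : a * b * a⁻¹ * b⁻¹ ∈ A := by
    rw [show a * b * a⁻¹ * b⁻¹ = a * (b * a⁻¹ * b⁻¹) by group]
    exact mul_mem ha ((mem_normalizer_iff.mp (hB hb) _).mp (inv_mem ha))
  have hcommB : a * b * a⁻¹ * b⁻¹ ∈ B :=
    mul_mem ((mem_normalizer_iff.mp (hA ha) b).mp hb) (inv_mem hb)
  have h1 := disjoint_def.mp (disjoint_of_coprime_natCard hAB) hcommA hcommB
  rw [mul_inv_eq_one, mul_inv_eq_iff_eq_mul] at h1
  exact h1.symm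

section Sylow

variable {G : Type*} [Group G] [Finite G]

theorem eq_top_of_forall_sylow_le {K : Subgroup G}
    (h : ∀ (q : ℕ) [Fact q.Prime], ∃ R : Sylow q G, (R : Subgroup G) ≤ K) : K = ⊤ := by
  rw [← index_eq_one, Nat.eq_one_iff_not_exists_prime_dvd]
  intro q hq hdvd
  have := Fact.mk hq
  obtain ⟨R, hR⟩ := h q
  exact R.not_dvd_index (hdvd.trans (index_dvd_of_le hR))

theorem IsPGroup.range_of_forall_sylow_le_ker {H : Type*} [Group H] {p : ℕ}
    (f : G →* H)
    (h : ∀ (q : ℕ) [Fact q.Prime], q ≠ p → ∃ R : Sylow q G, (R : Subgroup G) ≤ f.ker) :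
    IsPGroup p f.range := by
  refine IsPGroup.of_card ((index_ker f).symm.trans
    (Nat.eq_prime_pow_of_unique_prime_dvd index_ne_zero_of_finite ?_))
  intro q hq hdvd
  by_contra hqp
  have := Fact.mk hq
  obtain ⟨R, hR⟩ := h q hqp
  exact R.not_dvd_index (hdvd.trans (index_dvd_of_le hR))

theorem Sylow.le_normalizer_map_subtype {H : Subgroup G} [Group.IsNilpotent H] {q : ℕ}
    [Fact q.Prime] (R : Sylow q H) : H ≤ normalizer ((R : Subgroup H).map H.subtype : Set G) := by
  have : (((R : Subgroup H).map H.subtype).subgroupOf H).Normal := by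
    rw [subgroupOf, comap_map_eq_self_of_injective H.subtype_injective]
    infer_instance
  exact le_normalizer_of_normal_subgroupOf (map_subtype_le _)

theorem IsPGroup.map_quotient_centralizer_of_le_normalizer_sylow {p : ℕ} [Fact p.Prime]
    {H N : Subgroup G} [N.Normal] (hN : IsPGroup p N)
    (hH : ∀ (q : ℕ) [Fact q.Prime], q ≠ p → ∀ R : Sylow q H,
      N ≤ normalizer ((R : Subgroup H).map H.subtype : Set G)) :
    IsPGroup p (H.map (QuotientGroup.mk' (centralizer (N : Set G)))) := by
  set π := QuotientGroup.mk' (centralizer (N : Set G))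
  have hrange : H.map π = (π.comp H.subtype).range := by
    rw [MonoidHom.range_comp, range_subtype]
  rw [hrange]
  refine IsPGroup.range_of_forall_sylow_le_ker _ fun q _ hqp ↦ ?_
  obtain ⟨R⟩ : Nonempty (Sylow q H) := inferInstance
  have hRN := le_centralizer_of_le_normalizer_of_coprime le_normalizer_of_normal (hH q hqp R)
    (IsPGroup.coprime_card_of_ne q p hqp _ N (R.isPGroup'.map H.subtype) hN)
  refine ⟨R, fun r hr ↦ ?_⟩
  rw [MonoidHom.mem_ker, MonoidHom.comp_apply, QuotientGroup.mk'_apply, QuotientGroup.eq_one_iff]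
  exact hRN (mem_map_of_mem _ hr)

theorem isPGroup_quotient_centralizer_of_le {p : ℕ} [Fact p.Prime] {V N : Subgroup G} [N.Normal]
    [Group.IsNilpotent V] (hN : IsPGroup p N) (hNV : N ≤ V)
    (hFV : FittingSubgroup G ⊔ V = ⊤) :
    IsPGroup p (G ⧸ centralizer (N : Set G)) := by
  set π := QuotientGroup.mk' (centralizer (N : Set G))
  obtain ⟨S⟩ : Nonempty (Sylow p (G ⧸ centralizer (N : Set G))) := inferInstance
  have hF : (FittingSubgroup G).map π ≤ S := by
    simp only [FittingSubgroup, Subgroup.map_iSup]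
    refine iSup₂_le fun H ⟨hHn, hHnil⟩ ↦ ?_
    have : (H.map π).Normal := hHn.map π (QuotientGroup.mk'_surjective _)
    refine IsPGroup.le_sylow_of_normal (hN.map_quotient_centralizer_of_le_normalizer_sylow
      fun q _ _ R ↦ ?_) S
    have := R.characteristic_of_normal inferInstance
    exact le_normalizer_of_normal
  have hV : IsPGroup p (V.map π) := hN.map_quotient_centralizer_of_le_normalizer_sylow
    fun q _ _ R ↦ hNV.trans R.le_normalizer_map_subtype
  have : ((FittingSubgroup G).map π).Normal :=
    (FittingSubgroup_normal G).map π (QuotientGroup.mk'_surjective _)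
  have hsup := (S.isPGroup'.to_le hF).to_sup_of_normal_left hV
  rw [← Subgroup.map_sup, hFV, ← MonoidHom.range_eq_map,
    MonoidHom.range_eq_top.mpr (QuotientGroup.mk'_surjective _)] at hsup
  exact hsup.of_equiv topEquiv

theorem normalCore_le_hypercenter {V : Subgroup G} [Group.IsNilpotent V]
    (hFV : FittingSubgroup G ⊔ V = ⊤) : V.normalCore ≤ hypercenter G := by
  set W := V.normalCore
  have : Group.IsNilpotent W := Group.nilpotent_of_mulEquiv (subgroupOfEquivOfLe V.normalCore_le)
  suffices (hypercenter G).subgroupOf W = ⊤ from subgroupOf_eq_top.mp this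
  refine eq_top_of_forall_sylow_le fun q _ ↦ ?_
  obtain ⟨R⟩ : Nonempty (Sylow q W) := inferInstance
  have := R.characteristic_of_normal inferInstance
  have hRV : (R : Subgroup W).map W.subtype ≤ V := (map_subtype_le _).trans V.normalCore_le
  have hR := le_hypercenter_of_isPGroup_quotient_centralizer (R.isPGroup'.map W.subtype)
    (isPGroup_quotient_centralizer_of_le (R.isPGroup'.map W.subtype) hRV hFV)
  exact ⟨R, fun r hr ↦ hR (mem_map_of_mem _ hr)⟩

end Sylow

theorem normalCore_eq_hypercenter_of_frobenius_nonsubnormal_general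
    (G : Type*) [Group G] [Finite G] :
    ∀ V : Subgroup G, IsMaximalNilpotent V → FittingSubgroup G ⊔ V = ⊤ →
      V.normalCore = hypercenter G := by
  intro V hV hFV
  have := hV.1
  exact le_antisymm (normalCore_le_hypercenter hFV) (normal_le_normalCore.mpr hV.hypercenter_le)

theorem normalCore_eq_hypercenter_of_frobenius_nonsubnormal
    (G : Type*) [Group G] [Finite G] (hnil : ¬Group.IsNilpotent G)
    (h : ∀ (p : ℕ) (P : Subgroup G), p.Prime → IsPGroup p P → ¬_root_.IsSubnormal P → FrobeniusNC p P) :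
    ∀ V : Subgroup G, IsMaximalNilpotent V → FittingSubgroup G ⊔ V = ⊤ →
      V.normalCore = hypercenter G :=
  normalCore_eq_hypercenter_of_frobenius_nonsubnormal_general G
end

section
/- Let G be a finite soluble group such that for every prime p dividing |G| and every Sylow p-subgroup P of G, the normalizer N_G(P) is p-decomposable. Then G is nilpotent. -/
open Subgroup

/-- A group `X` is `p`-decomposable if it is the internal direct product of a normal
`p`-subgroup and a normal subgroup of order coprime to `p`
(i.e. `X = O_p(X) × O_{p'}(X)`). -/
def PDecomposable (p : ℕ) (X : Type*) [Group X] : Prop :=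
  ∃ H K : Subgroup X, H.Normal ∧ K.Normal ∧ IsPGroup p H ∧
    Nat.Coprime (Nat.card K) p ∧ H ⊓ K = ⊥ ∧ H ⊔ K = ⊤

/-!
Induction on `|G|`. A nontrivial soluble group has a nontrivial abelian normal subgroup, hence a
nontrivial normal `q`-subgroup `N`. By a Frattini argument, the normalizer of the image of a Sylow
subgroup in `G/N` is the image of its normalizer, and `p`-decomposability passes to quotients, so
`G/N` inherits the hypothesis and is nilpotent. A Sylow `q`-subgroup `Q` of `G` contains `N` and
has normal image in `G/N`, so `Q` is normal; thus `G = N_G(Q) = H × K` is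
`q`-decomposable with `N ≤ H`. Then `G/H`, a quotient of `G/N`, and `G/K ≅ H` are nilpotent, and
`G` embeds into `G/H × G/K`.
-/

namespace Sylow

variable {G : Type*} [Group G] {p : ℕ}

theorem normal_of_normal_map {G' : Type*} [Group G'] {f : G →* G'}
    (hf : IsPGroup p f.ker) (P : Sylow p G) (h : ((P : Subgroup G).map f).Normal) :
    (P : Subgroup G).Normal := by
  have hP : ((P : Subgroup G).map f).comap f = P := by
    rw [comap_map_eq, sup_eq_left.mpr (hf.le_sylow_of_normal P)]
  exact hP ▸ h.comap f

theorem normalizer_le_normalizer_sup [Fact p.Prime] [Finite G] (P : Sylow p G) {M : Subgroup G}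
    (hPM : (P : Subgroup G) ≤ M) :
    normalizer (M : Set G) ≤ normalizer ((P : Subgroup G) : Set G) ⊔ M := by
  intro g hg
  have hgP : ((g • P : Sylow p G) : Subgroup G) ≤ M :=
    (pointwise_smul_le_pointwise_smul_iff.mpr hPM).trans_eq (mem_normalizer_iff_map_conj_eq.mp hg)
  obtain ⟨m, hm⟩ := MulAction.exists_smul_eq M ((g • P).subtype hgP) (P.subtype hPM)
  rw [smul_subtype] at hm
  have hmg : (m : G) * g ∈ normalizer ((P : Subgroup G) : Set G) := by
    refine smul_eq_iff_mem_normalizer.mp ?_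
    rw [mul_smul, ← Subgroup.smul_def]
    exact subtype_injective hm
  rw [sup_comm]
  simpa using mul_mem_sup (M.inv_mem m.2) hmg

theorem map_normalizer_eq [Fact p.Prime] [Finite G] {G' : Type*} [Group G'] {f : G →* G'}
    (hf : Function.Surjective f) (P : Sylow p G) :
    (normalizer ((P : Subgroup G) : Set G)).map f =
      normalizer (((P : Subgroup G).map f : Subgroup G') : Set G') := by
  refine le_antisymm (le_normalizer_map f) ?_
  calc normalizer (((P : Subgroup G).map f : Subgroup G') : Set G')
      = (normalizer (((P : Subgroup G).map f).comap f : Set G)).map f := by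
        rw [← comap_normalizer_eq_of_surjective _ hf, map_comap_eq_self_of_surjective hf]
    _ ≤ (normalizer ((P : Subgroup G) : Set G) ⊔ ((P : Subgroup G).map f).comap f).map f :=
        map_mono (P.normalizer_le_normalizer_sup (le_comap_map f _))
    _ = (normalizer ((P : Subgroup G) : Set G)).map f := by
        rw [Subgroup.map_sup, map_comap_eq_self_of_surjective hf, sup_eq_left]
        exact map_mono le_normalizer

end Sylow

theorem Subgroup.card_quotient_lt_card {G : Type*} [Group G] [Finite G] {N : Subgroup G}
    (hN : N ≠ ⊥) : Nat.card (G ⧸ N) < Nat.card G := by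
  rw [card_eq_card_quotient_mul_card_subgroup N]
  exact lt_mul_of_one_lt_right Nat.card_pos (N.one_lt_card_iff_ne_bot.mpr hN)

theorem Group.IsSolvable.exists_normal_ne_bot_isMulCommutative {G : Type*} [Group G] [Finite G]
    [Group.IsSolvable G] [Nontrivial G] :
    ∃ A : Subgroup G, A.Normal ∧ A ≠ ⊥ ∧ IsMulCommutative A := by
  obtain ⟨A, ⟨hA, hA1⟩, hmin⟩ := wellFounded_lt.has_min {H : Subgroup G | H.Normal ∧ H ≠ ⊥}
    ⟨⊤, inferInstance, top_ne_bot⟩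
  refine ⟨A, hA, hA1, commutator_self_eq_bot_iff.mp ?_⟩
  by_contra hne
  exact hmin _ ⟨inferInstance, hne⟩ (commutator_lt_of_ne_bot hA1)

theorem Subgroup.Normal.exists_normal_isPGroup_ne_bot {G : Type*} [Group G] [Finite G]
    {A : Subgroup G} (hA : A.Normal) [Group.IsNilpotent A] (hA1 : A ≠ ⊥) :
    ∃ p, p.Prime ∧ ∃ N : Subgroup G, N.Normal ∧ IsPGroup p N ∧ N ≠ ⊥ := by
  have : Nontrivial A := (nontrivial_iff_ne_bot A).mpr hA1
  obtain ⟨p, hp, hpA⟩ := Nat.exists_prime_and_dvd (Finite.one_lt_card (α := A)).ne'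
  have : Fact p.Prime := ⟨hp⟩
  obtain ⟨W⟩ : Nonempty (Sylow p A) := inferInstance
  have := W.characteristic_of_normal inferInstance
  refine ⟨p, hp, (W : Subgroup A).map A.subtype, inferInstance, W.2.map _, ?_⟩
  rw [Ne, map_eq_bot_iff_of_injective _ A.subtype_injective]
  exact W.ne_bot_of_dvd_card hpA

theorem Group.isNilpotent_of_inf_eq_bot {G : Type*} [Group G] {H K : Subgroup G} [H.Normal]
    [K.Normal] [IsNilpotent (G ⧸ H)] [IsNilpotent (G ⧸ K)] (hHK : H ⊓ K = ⊥) : IsNilpotent G := by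
  have hinj : Function.Injective ((QuotientGroup.mk' H).prod (QuotientGroup.mk' K)) := by
    rw [← MonoidHom.ker_eq_bot_iff, MonoidHom.ker_prod, QuotientGroup.ker_mk',
      QuotientGroup.ker_mk', hHK]
  exact nilpotent_of_mulEquiv (MonoidHom.ofInjective hinj).symm

namespace PDecomposable

variable {p : ℕ} [Fact p.Prime] {X : Type*} [Group X] [Finite X]

theorem of_surjective {Y : Type*} [Group Y] (hX : PDecomposable p X) {f : X →* Y}
    (hf : Function.Surjective f) : PDecomposable p Y := by
  have : Finite Y := Finite.of_surjective f hf
  obtain ⟨H, K, hH, hK, hHp, hKp, -, hsup⟩ := hX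
  have hKp' : (Nat.card (K.map f)).Coprime p :=
    hKp.coprime_dvd_left (card_dvd_of_surjective _ (f.subgroupMap_surjective K))
  obtain ⟨n, hn⟩ := IsPGroup.iff_card.mp (hHp.map f)
  refine ⟨H.map f, K.map f, hH.map f hf, hK.map f hf, hHp.map f, hKp', ?_, ?_⟩
  · exact disjoint_iff.mp (disjoint_of_coprime_natCard (hn ▸ hKp'.symm.pow_left n))
  · rw [← Subgroup.map_sup, hsup, ← MonoidHom.range_eq_map,
      MonoidHom.range_eq_top_of_surjective _ hf]

theorem isNilpotent_of_isNilpotent_quotient (hX : PDecomposable p X) {N : Subgroup X} [N.Normal]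
    (hN : IsPGroup p N) [Group.IsNilpotent (X ⧸ N)] : Group.IsNilpotent X := by
  obtain ⟨H, K, hH, hK, hHp, hKp, hinf, hsup⟩ := hX
  have hHK : H.IsComplement' K := isComplement'_of_disjoint_and_mul_eq_univ
    (disjoint_iff.mpr hinf) (by rw [← mul_normal, hsup, coe_top])
  have hHsylow : ¬ p ∣ H.index := by
    rw [hHK.symm.index_eq_card]
    exact (Nat.Prime.coprime_iff_not_dvd Fact.out).mp hKp.symm
  have hNH : N ≤ H := hN.le_sylow_of_normal (hHp.toSylow hHsylow)
  have : Group.IsNilpotent (X ⧸ H) :=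
    Group.nilpotent_of_surjective (QuotientGroup.map N H (.id X) hNH)
      (QuotientGroup.map_surjective_of_surjective _ _ _ QuotientGroup.mk_surjective _)
  have : Group.IsNilpotent H := hHp.isNilpotent
  have : Group.IsNilpotent (X ⧸ K) := Group.nilpotent_of_mulEquiv hHK.QuotientMulEquiv.symm
  exact Group.isNilpotent_of_inf_eq_bot hinf

end PDecomposable

def SylowNormalizersPDecomposable (G : Type*) [Group G] : Prop :=
  ∀ p : ℕ, p.Prime → p ∣ Nat.card G → ∀ P : Sylow p G,
    PDecomposable p ↥(normalizer ((P : Subgroup G) : Set G))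

theorem SylowNormalizersPDecomposable.of_surjective {G G' : Type*} [Group G] [Group G']
    [Finite G] (h : SylowNormalizersPDecomposable G) {f : G →* G'} (hf : Function.Surjective f) :
    SylowNormalizersPDecomposable G' := by
  intro p hp hpG' P'
  have : Fact p.Prime := ⟨hp⟩
  obtain ⟨P, rfl⟩ := Sylow.mapSurjective_surjective hf p P'
  rw [Sylow.coe_mapSurjective, ← P.map_normalizer_eq hf]
  exact (h p hp (hpG'.trans (card_dvd_of_surjective f hf)) P).of_surjective
    (f.subgroupMap_surjective _)

theorem nilpotent_of_sylow_normalizers_decomposable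
    (G : Type*) [Group G] [Finite G] (hsol : IsSolvable G)
    (h : ∀ p : ℕ, p.Prime → p ∣ Nat.card G → ∀ P : Sylow p G,
      PDecomposable p ↥(normalizer ((P : Subgroup G) : Set G))) :
    Group.IsNilpotent G := by
  induction hn : Nat.card G using Nat.strong_induction_on generalizing G with
  | _ n ih =>
    have : Group.IsSolvable G := hsol
    rcases subsingleton_or_nontrivial G with _ | _
    · infer_instance
    obtain ⟨A, hA, hA1, hAcomm⟩ := Group.IsSolvable.exists_normal_ne_bot_isMulCommutative (G := G)
    have : Group.IsNilpotent A := ⟨1, upperCentralSeries_one_eq_top_iff.mpr hAcomm⟩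
    obtain ⟨q, hq, N, hN, hNq, hN1⟩ := hA.exists_normal_isPGroup_ne_bot hA1
    have : Fact q.Prime := ⟨hq⟩
    have : Group.IsNilpotent (G ⧸ N) :=
      ih _ (hn ▸ card_quotient_lt_card hN1) (G ⧸ N) (inferInstance : Group.IsSolvable (G ⧸ N))
        (SylowNormalizersPDecomposable.of_surjective h (QuotientGroup.mk'_surjective N)) rfl
    obtain ⟨Q⟩ : Nonempty (Sylow q G) := inferInstance
    have hQN : (Q.mapSurjective (QuotientGroup.mk'_surjective N) : Subgroup (G ⧸ N)).Normal :=
      inferInstance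
    have hQ : (Q : Subgroup G).Normal :=
      Q.normal_of_normal_map (by rwa [QuotientGroup.ker_mk']) hQN
    have hqG : q ∣ Nat.card G :=
      (hNq.card_eq_or_dvd.resolve_left (mt card_eq_one.mp hN1)).trans N.card_subgroup_dvd_card
    have hG : PDecomposable q G := by
      have hNQ := h q hq hqG Q
      rw [normalizer_eq_top_iff.mpr hQ] at hNQ
      exact hNQ.of_surjective (f := (topEquiv (G := G)).toMonoidHom) topEquiv.surjective
    exact hG.isNilpotent_of_isNilpotent_quotient hNq
end
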